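/- arXiv:2402.04832 — 4 statements merged into one kernel-verified Lean document; each statement's English description precedes it below -/
import Mathlib

section
/- Let ψ be an unambiguous DNF over variables x₁,…,xₙ. Construct ψ^∨ by: replacing each occurrence of xᵢ by ⋁ⱼ yᵢⱼ (over m fresh variables per original variable), expanding by distributivity into a DNF, and strengthening each term by adding, for each positive literal yᵢⱼ in it, the negative literals ¬yᵢⱼ' for all j' ≠ j. Then ψ^∨ is an unambiguous DNF. -/
/-- Satisfaction of a term of the original DNF `ψ`, given by positive/negative literal
indicators `pos, neg : Fin n → Bool`, by an assignment `β` to `x₁,…,xₙ`. -/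
def satPsiTerm {n : ℕ} (pos neg : Fin n → Bool) (β : Fin n → Bool) : Prop :=
  (∀ i, pos i = true → β i = true) ∧ (∀ i, neg i = true → β i = false)

/-- Satisfaction of a term of the copy-construction DNF `ψ^∨`: the term derived from the
original term `(pos, neg)` by the choice `j` of one copy per positive variable. The
variables are the copies `yᵢⱼ`, i.e. pairs in `Fin n × Fin m`. For each positive `i` the
chosen copy `yᵢ,ⱼᵢ` must be true and all other copies `yᵢⱼ'` false; for each negative `i`
all copies are false. -/
def satCopyTerm {n m : ℕ} (pos neg : Fin n → Bool) (j : Fin n → Fin m)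
    (α : Fin n × Fin m → Bool) : Prop :=
  (∀ i, pos i = true →
      α (i, j i) = true ∧ ∀ j' : Fin m, j' ≠ j i → α (i, j') = false) ∧
  (∀ i, neg i = true → ∀ j' : Fin m, α (i, j') = false)

/-! An assignment `α` to the copies `yᵢⱼ` induces the assignment `xᵢ := ⋁ⱼ yᵢⱼ`, and every
term of `ψ^∨` satisfied by `α` comes from a term of `ψ` satisfied by that induced assignment;
unambiguity of `ψ` thus fixes the originating term. The chosen copies are then fixed as well,
since each term of `ψ^∨` makes exactly one copy of each positive variable true. -/

def orOfCopies {n m : ℕ} (α : Fin n × Fin m → Bool) : Fin n → Bool :=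
  fun i => decide (∃ j, α (i, j) = true)

theorem satPsiTerm_orOfCopies {n m : ℕ} {pos neg : Fin n → Bool} {j : Fin n → Fin m}
    {α : Fin n × Fin m → Bool} (h : satCopyTerm pos neg j α) :
    satPsiTerm pos neg (orOfCopies α) := by
  refine ⟨fun i hi => decide_eq_true ⟨j i, (h.1 i hi).1⟩, fun i hi => ?_⟩
  simp [orOfCopies, h.2 i hi]

theorem copy_eq_of_satCopyTerm {n m : ℕ} {pos₁ neg₁ pos₂ neg₂ : Fin n → Bool}
    {j₁ j₂ : Fin n → Fin m} {α : Fin n × Fin m → Bool}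
    (h₁ : satCopyTerm pos₁ neg₁ j₁ α) (h₂ : satCopyTerm pos₂ neg₂ j₂ α) {i : Fin n}
    (hi₁ : pos₁ i = true) (hi₂ : pos₂ i = true) : j₁ i = j₂ i := by
  by_contra hne
  have htrue : α (i, j₁ i) = true := (h₁.1 i hi₁).1
  have hfalse : α (i, j₁ i) = false := (h₂.1 i hi₂).2 (j₁ i) hne
  simp [htrue] at hfalse

/-- If `ψ` is an unambiguous DNF over `x₁,…,xₙ`, then the DNF `ψ^∨`
obtained by substituting `⋁ⱼ yᵢⱼ` for `xᵢ`, expanding by distributivity and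
strengthening each term with the negative literals `¬yᵢⱼ'` (`j' ≠ j`) for each positive
literal `yᵢⱼ`, is again unambiguous: any assignment `α` satisfies at most one term of
`ψ^∨` (terms of `ψ^∨` being determined by the originating term and the choice of copies
on its positive positions). -/
theorem copy_construction_unambiguous
    (n m ℓ : ℕ) (pos neg : Fin ℓ → Fin n → Bool)
    (hunamb : ∀ (β : Fin n → Bool) (t₁ t₂ : Fin ℓ),
      satPsiTerm (pos t₁) (neg t₁) β → satPsiTerm (pos t₂) (neg t₂) β → t₁ = t₂) :
    ∀ (α : Fin n × Fin m → Bool) (t₁ t₂ : Fin ℓ) (j₁ j₂ : Fin n → Fin m),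
      satCopyTerm (pos t₁) (neg t₁) j₁ α → satCopyTerm (pos t₂) (neg t₂) j₂ α →
      t₁ = t₂ ∧ ∀ i, pos t₁ i = true → j₁ i = j₂ i := by
  intro α t₁ t₂ j₁ j₂ h₁ h₂
  obtain rfl : t₁ = t₂ :=
    hunamb (orOfCopies α) t₁ t₂ (satPsiTerm_orOfCopies h₁) (satPsiTerm_orOfCopies h₂)
  exact ⟨rfl, fun i hi => copy_eq_of_satCopyTerm h₁ h₂ hi hi⟩
end

section
/- Under the copy construction, an assignment α to the variables yᵢⱼ satisfies a term of ψ^∨ derived from term D of ψ if and only if the induced assignment β (defined by β(xᵢ) = 1 iff α satisfies ⋁ⱼ yᵢⱼ) satisfies D and, for each i with β(xᵢ)=1 appearing positively in D, exactly one yᵢⱼ is true under α while matching the chosen index; in particular, if β satisfies a unique term D of ψ, then α satisfies at most one term of ψ^∨. -/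
/-- The induced assignment `β` on the original variables: `β(xᵢ) = 1` iff `α`
satisfies `⋁ⱼ yᵢⱼ`. -/
def induced {n m : ℕ} (α : Fin n × Fin m → Bool) : Fin n → Bool :=
  fun i => decide (∃ j' : Fin m, α (i, j') = true)

section CopyConstruction

variable {n m : ℕ}

theorem induced_eq_true_iff (α : Fin n × Fin m → Bool) (i : Fin n) :
    induced α i = true ↔ ∃ j, α (i, j) = true := by
  simp [induced]

theorem induced_eq_false_iff (α : Fin n × Fin m → Bool) (i : Fin n) :
    induced α i = false ↔ ∀ j, α (i, j) = false := by
  simp [induced]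

theorem only_copy_iff (a : Fin m → Bool) (j₀ : Fin m) :
    (∀ j, j ≠ j₀ → a j = false) ↔ ∀ j, a j = true → j = j₀ :=
  forall_congr' fun j => by rw [← Bool.not_eq_true, not_imp_not]

theorem satCopyTerm_iff (pos neg : Fin n → Bool) (j : Fin n → Fin m)
    (α : Fin n × Fin m → Bool) :
    satCopyTerm pos neg j α ↔
      satPsiTerm pos neg (induced α) ∧
        ∀ i, pos i = true → α (i, j i) = true ∧ ∀ j', α (i, j') = true → j' = j i := by
  simp only [satCopyTerm, satPsiTerm, induced_eq_true_iff, induced_eq_false_iff,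
    only_copy_iff fun j' => α (_, j')]
  constructor
  · rintro ⟨hpos, hneg⟩
    exact ⟨⟨fun i hi => ⟨j i, (hpos i hi).1⟩, hneg⟩, hpos⟩
  · rintro ⟨⟨-, hneg⟩, hpos⟩
    exact ⟨hpos, hneg⟩

theorem satCopyTerm.choice_eq {pos₁ neg₁ pos₂ neg₂ : Fin n → Bool} {j₁ j₂ : Fin n → Fin m}
    {α : Fin n × Fin m → Bool} (h₁ : satCopyTerm pos₁ neg₁ j₁ α)
    (h₂ : satCopyTerm pos₂ neg₂ j₂ α) {i : Fin n} (hi₁ : pos₁ i = true)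
    (hi₂ : pos₂ i = true) : j₁ i = j₂ i := by
  by_contra hne
  have := (h₂.1 i hi₂).2 (j₁ i) hne
  rw [(h₁.1 i hi₁).1] at this
  exact Bool.noConfusion this

end CopyConstruction

/-- An assignment `α` to the copy variables satisfies the term of `ψ^∨`
derived from term `D` of `ψ` iff the induced assignment `β` satisfies `D` and, for each
positive position `i` of `D`, exactly one copy `yᵢⱼ` is true under `α`, matching the
chosen index; in particular, if `β` satisfies a unique term `D` of `ψ` then `α`
satisfies at most one term of `ψ^∨`. -/
theorem copy_term_characterisation
    (n m ℓ : ℕ) (pos neg : Fin ℓ → Fin n → Bool) (α : Fin n × Fin m → Bool) :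
    (∀ (t : Fin ℓ) (j : Fin n → Fin m),
      satCopyTerm (pos t) (neg t) j α ↔
        (satPsiTerm (pos t) (neg t) (induced α) ∧
          ∀ i, pos t i = true →
            α (i, j i) = true ∧ ∀ j' : Fin m, α (i, j') = true → j' = j i)) ∧
    ((∃! t : Fin ℓ, satPsiTerm (pos t) (neg t) (induced α)) →
      ∀ (t₁ t₂ : Fin ℓ) (j₁ j₂ : Fin n → Fin m),
        satCopyTerm (pos t₁) (neg t₁) j₁ α → satCopyTerm (pos t₂) (neg t₂) j₂ α →
        t₁ = t₂ ∧ ∀ i, pos t₁ i = true → j₁ i = j₂ i) := by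
  refine ⟨fun t j => satCopyTerm_iff _ _ j α, ?_⟩
  rintro ⟨t, -, huniq⟩ t₁ t₂ j₁ j₂ h₁ h₂
  have ht₁ : t₁ = t := huniq t₁ ((satCopyTerm_iff _ _ _ _).mp h₁).1
  have ht₂ : t₂ = t := huniq t₂ ((satCopyTerm_iff _ _ _ _).mp h₂).1
  subst ht₁ ht₂
  exact ⟨rfl, fun i hi => h₁.choice_eq h₂ hi hi⟩
end

section
/- If every term of a DNF φ over variables V has at most k literals and there is a v-tree T over V, then φ admits a DNNF respecting T of size O(ℓ·k·|V|) where ℓ is the number of terms; if moreover φ is unambiguous, the resulting circuit is deterministic (a d-SDNNF). -/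
/-- Circuits in negation normal form over variables `V` (fan-in two, constants,
literals at the leaves). -/
inductive NNF (V : Type) where
  | tru : NNF V
  | fls : NNF V
  | var (v : V) : NNF V
  | nvar (v : V) : NNF V
  | and (l r : NNF V) : NNF V
  | or (l r : NNF V) : NNF V

namespace NNF

def eval {V : Type} : NNF V → (V → Bool) → Bool
  | tru, _ => true
  | fls, _ => false
  | var v, α => α v
  | nvar v, α => !(α v)
  | and l r, α => l.eval α && r.eval α
  | or l r, α => l.eval α || r.eval α

/-- Number of nodes. -/
def size {V : Type} : NNF V → ℕ
  | and l r => l.size + r.size + 1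
  | or l r => l.size + r.size + 1
  | _ => 1

/-- Variables occurring in the circuit. -/
def vars {V : Type} : NNF V → Set V
  | tru => ∅
  | fls => ∅
  | var v => {v}
  | nvar v => {v}
  | and l r => l.vars ∪ r.vars
  | or l r => l.vars ∪ r.vars

/-- Decomposability: the children of every ∧-node have disjoint variables. -/
def Decomposable {V : Type} : NNF V → Prop
  | and l r => l.vars ∩ r.vars = ∅ ∧ l.Decomposable ∧ r.Decomposable
  | or l r => l.Decomposable ∧ r.Decomposable
  | _ => True

/-- Determinism: the children of every ∨-node have disjoint sets of satisfying
assignments (over the full domain). -/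
def Deterministic {V : Type} : NNF V → Prop
  | and l r => l.Deterministic ∧ r.Deterministic
  | or l r => (∀ α, ¬(l.eval α = true ∧ r.eval α = true)) ∧
      l.Deterministic ∧ r.Deterministic
  | _ => True

end NNF

/-- v-trees: full rooted binary trees with leaves labelled by variables. -/
inductive VTree (V : Type) where
  | leaf (v : V) : VTree V
  | node (l r : VTree V) : VTree V

namespace VTree

def leaves {V : Type} : VTree V → Set V
  | leaf v => {v}
  | node l r => l.leaves ∪ r.leaves

def leafList {V : Type} : VTree V → List V
  | leaf v => [v]
  | node l r => l.leafList ++ r.leafList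

def subtrees {V : Type} : VTree V → Set (VTree V)
  | leaf v => {leaf v}
  | node l r => insert (node l r) (l.subtrees ∪ r.subtrees)

/-- A v-tree over `V`: its leaves are in 1-1 correspondence with the elements of `V`. -/
def IsOver {V : Type} (T : VTree V) : Prop :=
  T.leafList.Nodup ∧ T.leaves = Set.univ

end VTree

/-- The structuredness condition: every ∧-node decomposes along some node of `T`. -/
def NNF.Respects {V : Type} (T : VTree V) : NNF V → Prop
  | NNF.and l r => (∃ tl tr : VTree V, VTree.node tl tr ∈ T.subtrees ∧
      l.vars ⊆ tl.leaves ∧ r.vars ⊆ tr.leaves) ∧ l.Respects T ∧ r.Respects T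
  | NNF.or l r => l.Respects T ∧ r.Respects T
  | _ => True

/-- Satisfaction of a term given by positive/negative literal indicators. -/
def satTerm {V : Type} (pos neg : V → Bool) (α : V → Bool) : Prop :=
  (∀ v, pos v = true → α v = true) ∧ (∀ v, neg v = true → α v = false)

/-!
Each term is compiled along the whole v-tree `T`: a leaf `v` becomes the literal the term
imposes on `v` (or a constant), and an inner node `t` the conjunction of the circuits of its
children, which decomposes along `t` itself. Such a circuit has `2|V| - 1` nodes and no
∨-node, so the disjunction of the `ℓ` term circuits is a structured DNNF with at most
`2ℓ|V| + 1` nodes whose ∨-nodes only separate distinct terms; it is deterministic as soon as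
no assignment satisfies two terms. When `k = 0` every term is empty and the constant `tru`
does the job.
-/

namespace VTree

variable {V : Type}

theorem mem_leaves_iff {t : VTree V} {v : V} : v ∈ t.leaves ↔ v ∈ t.leafList := by
  induction t with
  | leaf w => simp [leaves, leafList]
  | node l r ihl ihr => simp [leaves, leafList, ihl, ihr]

theorem self_mem_subtrees (t : VTree V) : t ∈ t.subtrees := by
  cases t <;> simp [subtrees]

theorem subtrees_left_subset (l r : VTree V) : l.subtrees ⊆ (node l r).subtrees :=
  fun _ hs => Or.inr (Or.inl hs)

theorem subtrees_right_subset (l r : VTree V) : r.subtrees ⊆ (node l r).subtrees :=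
  fun _ hs => Or.inr (Or.inr hs)

end VTree

namespace NNF

variable {V : Type}

/-- The term with positive literals `p` and negative literals `n`, as a circuit whose
∧-nodes follow the inner nodes of `t`. -/
def termAlong (p n : V → Bool) : VTree V → NNF V
  | .leaf v => if p v then (if n v then fls else var v) else if n v then nvar v else tru
  | .node l r => and (termAlong p n l) (termAlong p n r)

theorem eval_termAlong (p n : V → Bool) (t : VTree V) (α : V → Bool) :
    (termAlong p n t).eval α = true ↔
      ∀ v ∈ t.leaves, (p v = true → α v = true) ∧ (n v = true → α v = false) := by
  induction t with
  | leaf v =>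
    simp only [termAlong, VTree.leaves, Set.mem_singleton_iff, forall_eq]
    split_ifs <;> cases hα : α v <;> simp_all [eval]
  | node l r ihl ihr =>
    simp only [termAlong, eval, Bool.and_eq_true, ihl, ihr, VTree.leaves, Set.mem_union]
    exact ⟨fun ⟨hl, hr⟩ v hv => hv.elim (hl v) (hr v),
      fun h => ⟨fun v hv => h v (.inl hv), fun v hv => h v (.inr hv)⟩⟩

theorem eval_termAlong_of_leaves_eq_univ (p n : V → Bool) {t : VTree V}
    (ht : t.leaves = Set.univ) (α : V → Bool) :
    (termAlong p n t).eval α = true ↔ satTerm p n α := by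
  simp only [eval_termAlong, ht, Set.mem_univ, true_implies, satTerm]
  exact forall_and

theorem vars_termAlong_subset (p n : V → Bool) (t : VTree V) :
    (termAlong p n t).vars ⊆ t.leaves := by
  induction t with
  | leaf v =>
    simp only [termAlong]
    split_ifs <;> simp [vars, VTree.leaves]
  | node l r ihl ihr => exact Set.union_subset_union ihl ihr

theorem size_termAlong (p n : V → Bool) (t : VTree V) :
    (termAlong p n t).size + 1 = 2 * t.leafList.length := by
  induction t with
  | leaf v =>
    simp only [termAlong]
    split_ifs <;> rfl
  | node l r ihl ihr =>
    simp only [termAlong, size, VTree.leafList, List.length_append]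
    omega

theorem decomposable_termAlong (p n : V → Bool) {t : VTree V} (ht : t.leafList.Nodup) :
    (termAlong p n t).Decomposable := by
  induction t with
  | leaf v =>
    simp only [termAlong]
    split_ifs <;> trivial
  | node l r ihl ihr =>
    rw [VTree.leafList, List.nodup_append] at ht
    refine ⟨Set.eq_empty_iff_forall_notMem.mpr fun v ⟨hvl, hvr⟩ => ?_, ihl ht.1, ihr ht.2.1⟩
    exact ht.2.2 v (VTree.mem_leaves_iff.mp (vars_termAlong_subset p n l hvl))
      v (VTree.mem_leaves_iff.mp (vars_termAlong_subset p n r hvr)) rfl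

theorem respects_termAlong (p n : V → Bool) {T t : VTree V} (ht : t.subtrees ⊆ T.subtrees) :
    (termAlong p n t).Respects T := by
  induction t with
  | leaf v =>
    simp only [termAlong]
    split_ifs <;> trivial
  | node l r ihl ihr =>
    exact ⟨⟨l, r, ht (VTree.self_mem_subtrees _), vars_termAlong_subset p n l,
        vars_termAlong_subset p n r⟩,
      ihl ((VTree.subtrees_left_subset l r).trans ht),
      ihr ((VTree.subtrees_right_subset l r).trans ht)⟩

theorem deterministic_termAlong (p n : V → Bool) (t : VTree V) :
    (termAlong p n t).Deterministic := by
  induction t with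
  | leaf v =>
    simp only [termAlong]
    split_ifs <;> trivial
  | node l r ihl ihr => exact ⟨ihl, ihr⟩

def disj : List (NNF V) → NNF V
  | [] => fls
  | c :: cs => or c (disj cs)

theorem eval_disj (cs : List (NNF V)) (α : V → Bool) :
    (disj cs).eval α = true ↔ ∃ c ∈ cs, c.eval α = true := by
  induction cs with
  | nil => simp [disj, eval]
  | cons c cs ih => simp [disj, eval, ih]

theorem size_disj_le {cs : List (NNF V)} {s : ℕ} (h : ∀ c ∈ cs, c.size + 1 ≤ s) :
    (disj cs).size ≤ cs.length * s + 1 := by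
  induction cs with
  | nil => simp [disj, size]
  | cons c cs ih =>
    have hc := h c List.mem_cons_self
    have hcs := ih fun d hd => h d (List.mem_cons_of_mem c hd)
    simp only [disj, size, List.length_cons, add_one_mul]
    omega

theorem decomposable_disj {cs : List (NNF V)} (h : ∀ c ∈ cs, c.Decomposable) :
    (disj cs).Decomposable := by
  induction cs with
  | nil => trivial
  | cons c cs ih =>
    exact ⟨h c List.mem_cons_self, ih fun d hd => h d (List.mem_cons_of_mem c hd)⟩

theorem respects_disj (T : VTree V) {cs : List (NNF V)} (h : ∀ c ∈ cs, c.Respects T) :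
    (disj cs).Respects T := by
  induction cs with
  | nil => trivial
  | cons c cs ih =>
    exact ⟨h c List.mem_cons_self, ih fun d hd => h d (List.mem_cons_of_mem c hd)⟩

theorem deterministic_disj {cs : List (NNF V)} (h : ∀ c ∈ cs, c.Deterministic)
    (hdisj : cs.Pairwise fun c d => ∀ α, ¬(c.eval α = true ∧ d.eval α = true)) :
    (disj cs).Deterministic := by
  induction cs with
  | nil => trivial
  | cons c cs ih =>
    rw [List.pairwise_cons] at hdisj
    refine ⟨fun α ⟨hc, hcs⟩ => ?_, h c List.mem_cons_self,
      ih (fun d hd => h d (List.mem_cons_of_mem c hd)) hdisj.2⟩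
    obtain ⟨d, hd, hdα⟩ := (eval_disj cs α).mp hcs
    exact hdisj.1 d hd α ⟨hc, hdα⟩

def ofDNF {ℓ : ℕ} (T : VTree V) (pos neg : Fin ℓ → V → Bool) : NNF V :=
  disj ((List.finRange ℓ).map fun t => termAlong (pos t) (neg t) T)

section ofDNF

variable {ℓ : ℕ} (pos neg : Fin ℓ → V → Bool) {T : VTree V}

theorem eval_ofDNF (hT : T.IsOver) (α : V → Bool) :
    (ofDNF T pos neg).eval α = true ↔ ∃ t, satTerm (pos t) (neg t) α := by
  simp [ofDNF, eval_disj, eval_termAlong_of_leaves_eq_univ _ _ hT.2]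

theorem decomposable_ofDNF (hT : T.IsOver) : (ofDNF T pos neg).Decomposable :=
  decomposable_disj <| by simpa using fun t => decomposable_termAlong (pos t) (neg t) hT.1

theorem respects_ofDNF : (ofDNF T pos neg).Respects T :=
  respects_disj T <| by simpa using fun t => respects_termAlong (pos t) (neg t) subset_rfl

theorem size_ofDNF_le [Fintype V] (hT : T.IsOver) :
    (ofDNF T pos neg).size ≤ ℓ * (2 * Fintype.card V) + 1 := by
  have hlen : T.leafList.length ≤ Fintype.card V := hT.1.length_le_card
  simpa [ofDNF] using size_disj_le (s := 2 * Fintype.card V)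
    (cs := (List.finRange ℓ).map fun t => termAlong (pos t) (neg t) T)
    (by simp only [List.mem_map]; rintro _ ⟨t, -, rfl⟩; rw [size_termAlong]; omega)

theorem deterministic_ofDNF (hT : T.IsOver)
    (hunamb : ∀ (α : V → Bool) (t₁ t₂ : Fin ℓ),
      satTerm (pos t₁) (neg t₁) α → satTerm (pos t₂) (neg t₂) α → t₁ = t₂) :
    (ofDNF T pos neg).Deterministic := by
  refine deterministic_disj (by simp [deterministic_termAlong]) ?_
  refine List.pairwise_map.mpr ((List.nodup_finRange ℓ).imp fun hne α ⟨h₁, h₂⟩ => hne ?_)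
  simp only [eval_termAlong_of_leaves_eq_univ _ _ hT.2] at h₁ h₂
  exact hunamb α _ _ h₁ h₂

end ofDNF

end NNF

theorem satTerm_of_card_filter_eq_zero {V : Type} [Fintype V] {p n : V → Bool}
    (h : (Finset.univ.filter fun v : V => p v = true ∨ n v = true).card = 0) (α : V → Bool) :
    satTerm p n α := by
  have hnone : ∀ v, ¬(p v = true ∨ n v = true) := by
    simpa [Finset.filter_eq_empty_iff] using h
  exact ⟨fun v hv => absurd (.inl hv) (hnone v), fun v hv => absurd (.inr hv) (hnone v)⟩

theorem dnf_to_structured_dnnf_general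
    (V : Type) [Fintype V]
    (ℓ k : ℕ) (pos neg : Fin ℓ → V → Bool)
    (hk : ∀ t : Fin ℓ,
      (Finset.univ.filter (fun v : V => pos t v = true ∨ neg t v = true)).card ≤ k)
    (T : VTree V) (hT : T.IsOver) :
    ∃ C : NNF V,
      (∀ α, C.eval α = true ↔ ∃ t, satTerm (pos t) (neg t) α) ∧
      C.Decomposable ∧
      C.Respects T ∧
      C.size ≤ 3 * ℓ * k * Fintype.card V + 3 ∧
      ((∀ (α : V → Bool) (t₁ t₂ : Fin ℓ),
          satTerm (pos t₁) (neg t₁) α → satTerm (pos t₂) (neg t₂) α → t₁ = t₂) →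
        C.Deterministic) := by
  by_cases hempty : k = 0 ∧ 0 < ℓ
  · obtain ⟨rfl, hℓ⟩ := hempty
    refine ⟨.tru, fun α => ?_, trivial, trivial, by simp [NNF.size], fun _ => trivial⟩
    exact iff_of_true rfl
      ⟨⟨0, hℓ⟩, satTerm_of_card_filter_eq_zero (Nat.le_zero.mp (hk _)) α⟩
  refine ⟨NNF.ofDNF T pos neg, NNF.eval_ofDNF pos neg hT, NNF.decomposable_ofDNF pos neg hT,
    NNF.respects_ofDNF pos neg, (NNF.size_ofDNF_le pos neg hT).trans ?_,
    NNF.deterministic_ofDNF pos neg hT⟩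
  rcases Nat.eq_zero_or_pos ℓ with rfl | hℓ
  · simp
  have hk1 : 1 ≤ k := Nat.one_le_iff_ne_zero.mpr fun hk0 => hempty ⟨hk0, hℓ⟩
  nlinarith [Nat.zero_le (ℓ * Fintype.card V)]

/-- If every term of a DNF `φ` over variables `V` has at most `k`
literals and `T` is a v-tree over `V`, then `φ` admits a DNNF respecting `T` of size
`O(ℓ·k·|V|)` where `ℓ` is the number of terms; if moreover `φ` is unambiguous, the
resulting circuit is deterministic (a d-SDNNF). -/
theorem dnf_to_structured_dnnf
    (V : Type) [Fintype V] [DecidableEq V]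
    (ℓ k : ℕ) (pos neg : Fin ℓ → V → Bool)
    (hk : ∀ t : Fin ℓ,
      (Finset.univ.filter (fun v : V => pos t v = true ∨ neg t v = true)).card ≤ k)
    (T : VTree V) (hT : T.IsOver) :
    ∃ C : NNF V,
      (∀ α, C.eval α = true ↔ ∃ t, satTerm (pos t) (neg t) α) ∧
      C.Decomposable ∧
      C.Respects T ∧
      C.size ≤ 3 * ℓ * k * Fintype.card V + 3 ∧
      ((∀ (α : V → Bool) (t₁ t₂ : Fin ℓ),
          satTerm (pos t₁) (neg t₁) α → satTerm (pos t₂) (neg t₂) α → t₁ = t₂) →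
        C.Deterministic) :=
  dnf_to_structured_dnnf_general V ℓ k pos neg hk T hT
end

section
/- Let F be a field with |F| = n' elements, and fix a 'balanced' partition (X', Y') of F meaning min(|X'|, |Y'|) ≥ n'/3. Partition F into n blocks of m = n'/n consecutive elements each, with m ≥ cn for a sufficiently large constant c. Then there exists an affine permutation σ (x ↦ ax+b, a ≠ 0) of F such that for every block i and each side k ∈ {X', Y'}, some element of block i is mapped into side k by σ. -/
/-!
Count affine maps `x ↦ a * x + b` as pairs `(a, b) ∈ F × F`. For two distinct points `x ≠ x'`
the pair of values `(a * x + b, a * x' + b)` runs over `F × F` exactly once, so the number of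
points of a block `S` sent into a side `T` has mean `|S| |T| / q` and variance
`|S| |T| (q - |T|) / q²` over the `q²` maps. By Chebyshev, at most `q² (q - |T|) / (|S| |T|)`
maps send no point of `S` into `T`, i.e. at most `2 q² / m` for a balanced side. Summing over
the `2 n` pairs (block, side) gives at most `4 n q² / m < q (q - 1)` bad maps once `m ≥ 6 n`,
so some map with `a ≠ 0` is good.
-/

open Finset

lemma card_filter_eq_zero_mul_sq_le {ι R : Type*} [Fintype ι] [CommRing R] [LinearOrder R]
    [IsStrictOrderedRing R] (f : ι → R) [DecidablePred (f · = 0)] (c : R) :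
    #{i | f i = 0} * c ^ 2 ≤ ∑ i, (f i - c) ^ 2 :=
  calc (#{i | f i = 0} : R) * c ^ 2 = ∑ i with f i = 0, (f i - c) ^ 2 := by
        rw [sum_congr rfl fun i hi => by rw [(mem_filter.1 hi).2, zero_sub, neg_sq], sum_const,
          nsmul_eq_mul]
    _ ≤ ∑ i, (f i - c) ^ 2 :=
        sum_le_sum_of_subset_of_nonneg (subset_univ _) fun _ _ _ => sq_nonneg _

namespace AffineHitting

variable {F : Type*} [Field F] [Fintype F] [DecidableEq F]

lemma card_filter_affine_mem (x : F) (T : Finset F) :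
    #{p : F × F | p.1 * x + p.2 ∈ T} = Fintype.card F * #T := by
  rw [← card_univ, ← card_product]
  refine card_nbij' (fun p => (p.1, p.1 * x + p.2)) (fun y => (y.1, y.2 - y.1 * x))
    ?_ ?_ ?_ ?_ <;> intro p <;> simp

lemma card_filter_affine_mem_mem {x x' : F} (hx : x ≠ x') (T T' : Finset F) :
    #{p : F × F | p.1 * x + p.2 ∈ T ∧ p.1 * x' + p.2 ∈ T'} = #T * #T' := by
  have hxx : x - x' ≠ 0 := sub_ne_zero_of_ne hx
  let interp (y : F × F) : F × F := ((y.1 - y.2) / (x - x'), y.1 - (y.1 - y.2) / (x - x') * x)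
  have interp_eval (y : F × F) :
      (interp y).1 * x + (interp y).2 = y.1 ∧ (interp y).1 * x' + (interp y).2 = y.2 := by
    simp only [interp]
    constructor
    · ring
    · field_simp; ring
  rw [← card_product]
  refine card_nbij' (fun p => (p.1 * x + p.2, p.1 * x' + p.2)) interp ?_ ?_ ?_ ?_
  · intro p; simp
  · intro y; simp [interp_eval]
  · intro p _
    simp only [interp]
    ext <;> field_simp <;> ring
  · intro y _
    ext <;> simp [interp_eval]

def hitCount (S T : Finset F) (p : F × F) : ℕ := #{x ∈ S | p.1 * x + p.2 ∈ T}

variable (S T : Finset F)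

lemma sum_hitCount : ∑ p, hitCount S T p = #S * (Fintype.card F * #T) := by
  simp only [hitCount, card_filter]
  rw [sum_comm]
  simp only [← card_filter, card_filter_affine_mem, sum_const, smul_eq_mul]

lemma sum_hitCount_sq :
    ∑ p, hitCount S T p ^ 2 + #S * #T ^ 2 = #S * #T * Fintype.card F + #S ^ 2 * #T ^ 2 := by
  have row (x : F) (hx : x ∈ S) :
      ∑ x' ∈ S, #{p : F × F | p.1 * x + p.2 ∈ T ∧ p.1 * x' + p.2 ∈ T} + #T ^ 2
        = Fintype.card F * #T + #S * #T ^ 2 := by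
    rw [← add_sum_erase S _ hx, sum_congr rfl fun x' hx' =>
      card_filter_affine_mem_mem (ne_of_mem_erase hx').symm T T]
    simp only [and_self, card_filter_affine_mem, sum_const, smul_eq_mul]
    rw [← card_erase_add_one hx]
    ring
  have expand : ∑ p, hitCount S T p ^ 2
      = ∑ x ∈ S, ∑ x' ∈ S, #{p : F × F | p.1 * x + p.2 ∈ T ∧ p.1 * x' + p.2 ∈ T} := by
    simp only [hitCount, card_filter, sq, sum_mul_sum, ite_zero_mul_ite_zero, mul_one]
    rw [sum_comm]
    exact sum_congr rfl fun x _ => sum_comm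
  rw [expand, ← smul_eq_mul, ← sum_const, ← sum_add_distrib, sum_congr rfl row, sum_const,
    smul_eq_mul]
  ring

lemma sum_sq_hitCount_sub :
    ∑ p, ((Fintype.card F : ℤ) * hitCount S T p - #S * #T) ^ 2
      = (Fintype.card F : ℤ) ^ 2 * #S * #T * (Fintype.card F - #T) := by
  have first : ∑ p, (hitCount S T p : ℤ) = #S * (Fintype.card F * #T) := by
    exact_mod_cast sum_hitCount S T
  have second : ∑ p, (hitCount S T p : ℤ) ^ 2 + #S * #T ^ 2
      = #S * #T * Fintype.card F + #S ^ 2 * #T ^ 2 := by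
    exact_mod_cast sum_hitCount_sq S T
  simp only [sub_sq, mul_pow, sum_add_distrib, sum_sub_distrib, ← mul_sum, ← sum_mul, sum_const,
    card_univ, Fintype.card_prod, nsmul_eq_mul, Nat.cast_mul]
  linear_combination (Fintype.card F : ℤ) ^ 2 * second - 2 * Fintype.card F * #S * #T * first

theorem card_hitCount_eq_zero_mul_le :
    #{p | hitCount S T p = 0} * (#S * #T) ≤ Fintype.card F ^ 2 * (Fintype.card F - #T) := by
  have hq : (Fintype.card F : ℤ) ≠ 0 := by exact_mod_cast Fintype.card_ne_zero
  have hcheb := card_filter_eq_zero_mul_sq_le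
    (fun p => (Fintype.card F : ℤ) * hitCount S T p) (#S * #T)
  simp only [mul_eq_zero, hq, false_or, Nat.cast_eq_zero, sum_sq_hitCount_sub] at hcheb
  rcases Nat.eq_zero_or_pos (#S * #T) with hmt | hmt
  · simp [hmt]
  rw [← Nat.cast_le (α := ℤ), ← mul_le_mul_iff_left₀ (Nat.cast_pos.2 hmt)]
  push_cast [Nat.cast_sub (card_le_univ T)]
  linear_combination hcheb

theorem card_hitCount_eq_zero_mul_le_of_balanced (hT : Fintype.card F ≤ 3 * #T) :
    #{p | hitCount S T p = 0} * #S ≤ 2 * Fintype.card F ^ 2 := by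
  have ht : 0 < #T := by have := Fintype.card_pos (α := F); omega
  refine le_of_mul_le_mul_right ?_ ht
  calc #{p | hitCount S T p = 0} * #S * #T
      = #{p | hitCount S T p = 0} * (#S * #T) := mul_assoc ..
    _ ≤ Fintype.card F ^ 2 * (Fintype.card F - #T) := card_hitCount_eq_zero_mul_le S T
    _ ≤ Fintype.card F ^ 2 * (2 * #T) := Nat.mul_le_mul_left _ (by omega)
    _ = 2 * Fintype.card F ^ 2 * #T := by ring

theorem exists_affine_hitCount_ne_zero {ι κ : Type*} [Fintype ι] [Fintype κ]
    (S : ι → Finset F) (T : κ → Finset F) {m : ℕ} (hS : ∀ i, m ≤ #(S i))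
    (hT : ∀ k, Fintype.card F ≤ 3 * #(T k))
    (hm : 2 * Fintype.card ι * Fintype.card κ * Fintype.card F < (Fintype.card F - 1) * m) :
    ∃ p : F × F, p.1 ≠ 0 ∧ ∀ i k, hitCount (S i) (T k) p ≠ 0 := by
  set q := Fintype.card F
  let bad := univ.biUnion fun ik : ι × κ => {p | hitCount (S ik.1) (T ik.2) p = 0}
  have hbad : #bad * m ≤ Fintype.card ι * Fintype.card κ * (2 * q ^ 2) :=
    calc #bad * m ≤ ∑ ik : ι × κ, #{p | hitCount (S ik.1) (T ik.2) p = 0} * m := by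
          rw [← sum_mul]; exact Nat.mul_le_mul_right _ card_biUnion_le
      _ ≤ ∑ ik : ι × κ, #{p | hitCount (S ik.1) (T ik.2) p = 0} * #(S ik.1) :=
          sum_le_sum fun ik _ => Nat.mul_le_mul_left _ (hS ik.1)
      _ ≤ ∑ _ : ι × κ, 2 * q ^ 2 := sum_le_sum fun ik _ =>
          card_hitCount_eq_zero_mul_le_of_balanced (S ik.1) (T ik.2) (hT ik.2)
      _ = Fintype.card ι * Fintype.card κ * (2 * q ^ 2) := by simp
  have hcard : #bad < #((univ.erase (0 : F)) ×ˢ (univ : Finset F)) := by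
    rw [card_product, card_erase_of_mem (mem_univ _), card_univ]
    refine lt_of_mul_lt_mul_right (hbad.trans_lt ?_) (Nat.zero_le m)
    have hq : 0 < q := Fintype.card_pos
    calc Fintype.card ι * Fintype.card κ * (2 * q ^ 2)
        = 2 * Fintype.card ι * Fintype.card κ * q * q := by ring
      _ < (q - 1) * m * q := Nat.mul_lt_mul_of_pos_right hm hq
      _ = (q - 1) * q * m := by ring
  obtain ⟨p, hp, hpbad⟩ := exists_mem_notMem_of_card_lt_card hcard
  exact ⟨p, by simpa using hp, fun i k h =>
    hpbad (mem_biUnion.2 ⟨(i, k), mem_univ _, by simpa using h⟩)⟩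

end AffineHitting

open AffineHitting in
/-- There is a sufficiently large constant `c` such that: for any finite
field `F` with `|F| = n·m` elements, partitioned into `n` blocks of `m` elements each
(given by a bijection `block : Fin n × Fin m ≃ F`), with `m ≥ c·n`, and for any
balanced two-sided partition of `F` (each side of size at least `|F|/3`, i.e.
`|F| ≤ 3·|side k|`), there exists an affine permutation `σ : x ↦ a·x + b` (`a ≠ 0`)
of `F` such that every block has, for each side `k`, some element mapped into side `k`
by `σ`. -/
theorem exists_good_affine_permutation :
    ∃ c : ℕ, 0 < c ∧
      ∀ (F : Type) [Field F] [Fintype F] (n m : ℕ)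
        (block : Fin n × Fin m ≃ F) (side : F → Bool),
        (∀ k : Bool, Fintype.card F ≤ 3 * Nat.card {x : F // side x = k}) →
        c * n ≤ m →
        ∃ a b : F, a ≠ 0 ∧
          ∀ (i : Fin n) (k : Bool), ∃ j : Fin m, side (a * block (i, j) + b) = k := by
  refine ⟨6, by norm_num, fun F _ _ n m block side hbal hm => ?_⟩
  classical
  have hq : Fintype.card F = n * m := by simp [← Fintype.card_congr block]
  let S (i : Fin n) : Finset F := univ.image fun j => block (i, j)
  have hS (i : Fin n) : m ≤ #(S i) := by
    rw [card_image_of_injective _ fun j j' h => by simpa using block.injective h, card_fin]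
  let T (k : Bool) : Finset F := {y | side y = k}
  have hT (k : Bool) : Fintype.card F ≤ 3 * #(T k) := by
    simpa [T, Nat.card_eq_fintype_card, Fintype.card_subtype] using hbal k
  have hnm : 0 < n * m := hq ▸ Fintype.card_pos
  have hcount : 2 * Fintype.card (Fin n) * Fintype.card Bool * Fintype.card F
      < (Fintype.card F - 1) * m := by
    simp only [Fintype.card_fin, Fintype.card_bool, hq]
    have hn : 0 < n := Nat.pos_of_mul_pos_right hnm
    zify [hnm] at hm ⊢
    nlinarith
  obtain ⟨p, hp, hhit⟩ := exists_affine_hitCount_ne_zero S T hS hT hcount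
  refine ⟨p.1, p.2, hp, fun i k => ?_⟩
  simpa [hitCount, S, T] using hhit i k
end
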